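/- arXiv:physics/9707005 — 4 statements merged into one kernel-verified Lean document; each statement's English description precedes it below -/
import Mathlib

section
/- In e(p), for each l with 0 ≤ l ≤ ⌊p/2⌋ and k = p - 2l, the subalgebra M = span{L₁₂, L₃₄, …, L_{2l-1,2l}, P_{2l+1}, …, P_p} is abelian of dimension l + k, and M equals its own centralizer in e(p) (i.e., M is a MASA). -/
/-! Write `E_{ab}` for the matrix units, so that `L_i = E_{2i,2i+1} - E_{2i+1,2i}` and
`P_j = E_{j,p}`. Distinct generators multiply to zero, so their span is abelian, and each generator
owns an entry that all the others leave zero, which makes them linearly independent. Conversely,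
a matrix commuting with `L_i` leaves the plane `(2i, 2i+1)` and its complement invariant and acts on
the plane as `a + bJ`, and one commuting with `P_j` vanishes on column `j` off the diagonal. For
`A ∈ e(p)` the diagonal vanishes, so `a = 0`, and so does the last row; subtracting from `A` the
combination of generators with the coefficients read off `A` then leaves the zero matrix. -/

open Matrix

noncomputable section

/-- The rotation generator in the plane of coordinates `2i, 2i+1` (0-based)
inside `e(p)` realized as `(p+1)×(p+1)` matrices. -/
def Lrot (p i : ℕ) : Matrix (Fin (p+1)) (Fin (p+1)) ℝ :=
  Matrix.of fun a b =>
    if (a : ℕ) = 2*i ∧ (b : ℕ) = 2*i+1 then 1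
    else if (a : ℕ) = 2*i+1 ∧ (b : ℕ) = 2*i then -1 else 0

/-- The translation generator in coordinate `j` (0-based) inside `e(p)`. -/
def Ptr (p j : ℕ) : Matrix (Fin (p+1)) (Fin (p+1)) ℝ :=
  Matrix.of fun a b => if (a : ℕ) = j ∧ (b : ℕ) = p then 1 else 0

/-- The Euclidean Lie algebra `e(p)`: matrices `[[X,α],[0,0]]` with `X` skew. -/
def eucAlg (p : ℕ) : Set (Matrix (Fin (p+1)) (Fin (p+1)) ℝ) :=
  {M | ∃ (X : Matrix (Fin p) (Fin p) ℝ) (α : Matrix (Fin p) (Fin 1) ℝ), Xᵀ = -X ∧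
    M = Matrix.reindex finSumFinEquiv finSumFinEquiv (Matrix.fromBlocks X α 0 0)}

/-- The standard split MASA `span{L₁₂, …, L_{2l-1,2l}} ⊕ span{P_{2l+1}, …, P_p}`. -/
def stdMASA (p l : ℕ) : Submodule ℝ (Matrix (Fin (p+1)) (Fin (p+1)) ℝ) :=
  Submodule.span ℝ
    ({M | ∃ i < l, M = Lrot p i} ∪ {M | ∃ j, 2*l ≤ j ∧ j < p ∧ M = Ptr p j})

namespace Matrix

variable {n α : Type*} [Fintype n] [DecidableEq n] [Ring α] {M : Matrix n n α} {i j k : n}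

theorem col_eq_zero_of_commute_single_sub_single
    (hM : Commute (single i j 1 - single j i 1) M) (hij : i ≠ j) (hki : k ≠ i) (hkj : k ≠ j) :
    M k i = 0 ∧ M k j = 0 := by
  have h₁ := ext_iff.mpr hM k j
  have h₂ := ext_iff.mpr hM k i
  simp [sub_mul, mul_sub, hki, hkj, hij, hij.symm] at h₁ h₂
  exact ⟨h₁.symm, h₂⟩

theorem row_eq_zero_of_commute_single_sub_single
    (hM : Commute (single i j 1 - single j i 1) M) (hij : i ≠ j) (hki : k ≠ i) (hkj : k ≠ j) :
    M i k = 0 ∧ M j k = 0 := by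
  have h₁ := ext_iff.mpr hM j k
  have h₂ := ext_iff.mpr hM i k
  simp_all [sub_mul, mul_sub, Ne.symm hij]

theorem apply_swap_eq_neg_of_commute_single_sub_single
    (hM : Commute (single i j 1 - single j i 1) M) (hij : i ≠ j) : M j i = -M i j := by
  have := ext_iff.mpr hM j j
  simp_all [sub_mul, mul_sub, Ne.symm hij]

end Matrix

variable {p l : ℕ}

lemma Lrot_eq_single_sub_single {i : ℕ} (hi : 2*i+1 < p+1) :
    Lrot p i = single ⟨2*i, by omega⟩ ⟨2*i+1, hi⟩ 1 - single ⟨2*i+1, hi⟩ ⟨2*i, by omega⟩ 1 := by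
  ext a b
  simp only [Lrot, of_apply, Matrix.sub_apply, single_apply, Fin.ext_iff]
  split_ifs <;> first | omega | norm_num

lemma Ptr_eq_single {j : ℕ} (hj : j < p+1) : Ptr p j = single ⟨j, hj⟩ (Fin.last p) 1 := by
  ext a b
  simp only [Ptr, of_apply, single_apply, Fin.ext_iff, Fin.val_last]
  split_ifs <;> first | rfl | omega

def stdGens (p l : ℕ) : Set (Matrix (Fin (p+1)) (Fin (p+1)) ℝ) :=
  {M | ∃ i < l, M = Lrot p i} ∪ {M | ∃ j, 2*l ≤ j ∧ j < p ∧ M = Ptr p j}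

lemma stdMASA_eq_span : stdMASA p l = Submodule.span ℝ (stdGens p l) := rfl

lemma mul_eq_zero_of_mem_stdGens (h : 2*l ≤ p) {A B : Matrix (Fin (p+1)) (Fin (p+1)) ℝ}
    (hA : A ∈ stdGens p l) (hB : B ∈ stdGens p l) (hAB : A ≠ B) : A * B = 0 := by
  ext a b
  rw [mul_apply, Matrix.zero_apply]
  refine Finset.sum_eq_zero fun c _ => ?_
  rcases hA with ⟨i, hi, rfl⟩ | ⟨j, hj, hjp, rfl⟩ <;>
    rcases hB with ⟨i', hi', rfl⟩ | ⟨j', hj', hjp', rfl⟩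
  on_goal 1 => obtain hii' : i ≠ i' := by rintro rfl; exact hAB rfl
  all_goals
    simp only [Lrot, Ptr, of_apply]
    split_ifs <;> first | omega | simp

lemma commute_of_mem_stdMASA (h : 2*l ≤ p) {A B : Matrix (Fin (p+1)) (Fin (p+1)) ℝ}
    (hA : A ∈ stdMASA p l) (hB : B ∈ stdMASA p l) : Commute A B := by
  have hgens : ∀ A ∈ stdGens p l, ∀ B ∈ stdGens p l, Commute A B := fun A hA B hB => by
    by_cases hAB : A = B
    · exact hAB ▸ Commute.refl A
    · rw [Commute, SemiconjBy, mul_eq_zero_of_mem_stdGens h hA hB hAB,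
        mul_eq_zero_of_mem_stdGens h hB hA (Ne.symm hAB)]
  exact Commute.span_left (fun A' hA' => Commute.span_right (hgens A' hA') B hB) A hA

lemma apply_eq_zero_of_mem_stdMASA (h : 2*l ≤ p) {M : Matrix (Fin (p+1)) (Fin (p+1)) ℝ}
    (hM : M ∈ stdMASA p l) {a b : Fin (p+1)} (hab : a = Fin.last p ∨ a = b) : M a b = 0 := by
  induction hM using Submodule.span_induction with
  | mem x hx =>
    rcases hx with ⟨i, hi, rfl⟩ | ⟨j, -, hj, rfl⟩ <;> rcases hab with rfl | rfl <;>
      simp only [Lrot, Ptr, of_apply, Fin.val_last] <;> split_ifs <;> first | rfl | omega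
  | zero => rfl
  | add x y _ _ hx hy => rw [Matrix.add_apply, hx, hy, add_zero]
  | smul c x _ hx => rw [Matrix.smul_apply, hx, smul_zero]

def stdFam (p l : ℕ) : Fin l ⊕ Fin (p - 2*l) → Matrix (Fin (p+1)) (Fin (p+1)) ℝ :=
  Sum.elim (fun i => Lrot p i) (fun j => Ptr p (2*l + j))

lemma range_stdFam (h : 2*l ≤ p) : Set.range (stdFam p l) = stdGens p l := by
  ext M
  constructor
  · rintro ⟨i | j, rfl⟩
    · exact Or.inl ⟨i, i.isLt, rfl⟩
    · exact Or.inr ⟨2*l + j, by omega, by omega, rfl⟩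
  · rintro (⟨i, hi, rfl⟩ | ⟨j, hj, hjp, rfl⟩)
    · exact ⟨.inl ⟨i, hi⟩, rfl⟩
    · refine ⟨.inr ⟨j - 2*l, by omega⟩, ?_⟩
      simp only [stdFam, Sum.elim_inr, Nat.add_sub_cancel' hj]

def stdCoeffs (h : 2*l ≤ p) :
    Matrix (Fin (p+1)) (Fin (p+1)) ℝ →ₗ[ℝ] (Fin l ⊕ Fin (p - 2*l) → ℝ) :=
  LinearMap.pi <| Sum.elim
    (fun i => entryLinearMap ℝ ℝ ⟨2*i, by omega⟩ ⟨2*i+1, by omega⟩)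
    (fun j => entryLinearMap ℝ ℝ ⟨2*l + j, by omega⟩ (Fin.last p))

lemma stdCoeffs_stdFam (h : 2*l ≤ p) (s : Fin l ⊕ Fin (p - 2*l)) :
    stdCoeffs h (stdFam p l s) = Pi.single s 1 := by
  ext t
  rcases s with i | j <;> rcases t with i' | j' <;>
    simp only [stdCoeffs, stdFam, Lrot, Ptr, LinearMap.pi_apply, Sum.elim_inl, Sum.elim_inr,
      entryLinearMap_apply, of_apply, Pi.single_apply, Sum.inl.injEq, Sum.inr.injEq, reduceCtorEq,
      if_false, and_true, Fin.ext_iff, Fin.val_last] <;> split_ifs <;> first | rfl | omega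

lemma linearIndependent_stdFam (h : 2*l ≤ p) : LinearIndependent ℝ (stdFam p l) :=
  LinearIndependent.of_comp (stdCoeffs h) <| by
    simpa only [Function.comp_def, stdCoeffs_stdFam] using Pi.linearIndependent_single_one _ ℝ

lemma finrank_stdMASA (h : 2*l ≤ p) : Module.finrank ℝ (stdMASA p l) = l + (p - 2*l) := by
  rw [stdMASA_eq_span, ← range_stdFam h, finrank_span_eq_card (linearIndependent_stdFam h),
    Fintype.card_sum, Fintype.card_fin, Fintype.card_fin]

lemma apply_eq_zero_of_mem_eucAlg {A : Matrix (Fin (p+1)) (Fin (p+1)) ℝ} (hA : A ∈ eucAlg p)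
    {a b : Fin (p+1)} (hab : a = Fin.last p ∨ a = b) : A a b = 0 := by
  obtain ⟨X, α, hX, rfl⟩ := hA
  rcases Fin.eq_castSucc_or_eq_last a with ⟨a, rfl⟩ | rfl
  · obtain rfl : Fin.castSucc a = b := hab.resolve_left (Fin.castSucc_ne_last a)
    have hXa : X a a = -X a a := congrFun₂ hX a a
    simp only [reindex_apply, submatrix_apply, finSumFinEquiv_symm_apply_castSucc,
      fromBlocks_apply₁₁]
    linarith
  · rw [reindex_apply, submatrix_apply, finSumFinEquiv_symm_last]
    cases finSumFinEquiv.symm b <;> rfl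

lemma commute_rot_of_commute_stdGens (h : 2*l ≤ p) {D : Matrix (Fin (p+1)) (Fin (p+1)) ℝ}
    (hcomm : ∀ B ∈ stdGens p l, Commute B D) {i : ℕ} (hi : i < l) :
    Commute
      (single ⟨2*i, by omega⟩ ⟨2*i+1, by omega⟩ 1 - single ⟨2*i+1, by omega⟩ ⟨2*i, by omega⟩ 1) D :=
  Lrot_eq_single_sub_single (p := p) (i := i) (by omega) ▸ hcomm _ (.inl ⟨i, hi, rfl⟩)

lemma apply_eq_zero_of_commute_stdGens (h : 2*l ≤ p) {D : Matrix (Fin (p+1)) (Fin (p+1)) ℝ}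
    (hD : ∀ a b, a = Fin.last p ∨ a = b → D a b = 0)
    (hcomm : ∀ B ∈ stdGens p l, Commute B D) (hcoeffs : stdCoeffs h D = 0)
    {a b : ℕ} (ha : a < p+1) (hb : b < p) : D ⟨a, ha⟩ ⟨b, by omega⟩ = 0 := by
  have hrot : ∀ i (hi : i < l), D ⟨2*i, by omega⟩ ⟨2*i+1, by omega⟩ = 0 :=
    fun i hi => congrFun hcoeffs (.inl ⟨i, hi⟩)
  obtain hb2l | hb2l : b < 2*l ∨ 2*l ≤ b := by omega
  · obtain ⟨i, rfl | rfl⟩ := Nat.even_or_odd' b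
    · obtain rfl | rfl | ⟨ha1, ha2⟩ : a = 2*i ∨ a = 2*i+1 ∨ (a ≠ 2*i ∧ a ≠ 2*i+1) := by omega
      · exact hD _ _ (.inr rfl)
      · rw [apply_swap_eq_neg_of_commute_single_sub_single
          (commute_rot_of_commute_stdGens h hcomm (by omega)) (by simp), hrot i (by omega),
          neg_zero]
      · exact (col_eq_zero_of_commute_single_sub_single
          (commute_rot_of_commute_stdGens h hcomm (by omega)) (by simp)
          (by simpa using ha1) (by simpa using ha2)).1
    · obtain rfl | rfl | ⟨ha1, ha2⟩ : a = 2*i ∨ a = 2*i+1 ∨ (a ≠ 2*i ∧ a ≠ 2*i+1) := by omega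
      · exact hrot i (by omega)
      · exact hD _ _ (.inr rfl)
      · exact (col_eq_zero_of_commute_single_sub_single
          (commute_rot_of_commute_stdGens h hcomm (by omega)) (by simp)
          (by simpa using ha1) (by simpa using ha2)).2
  · by_cases hab : a = b
    · exact hD _ _ (.inr (Fin.ext hab))
    · have hP := hcomm _ (.inr ⟨b, hb2l, hb, rfl⟩)
      rw [Ptr_eq_single (by omega)] at hP
      exact col_eq_zero_of_commute_single hP (by simpa using hab)

lemma apply_last_eq_zero_of_commute_stdGens (h : 2*l ≤ p) {D : Matrix (Fin (p+1)) (Fin (p+1)) ℝ}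
    (hD : ∀ a b, a = Fin.last p ∨ a = b → D a b = 0)
    (hcomm : ∀ B ∈ stdGens p l, Commute B D) (hcoeffs : stdCoeffs h D = 0)
    {a : ℕ} (ha : a < p+1) : D ⟨a, ha⟩ (Fin.last p) = 0 := by
  obtain ha2l | ⟨ha2l, hap⟩ | hap : a < 2*l ∨ (2*l ≤ a ∧ a < p) ∨ a = p := by omega
  · obtain ⟨i, rfl | rfl⟩ := Nat.even_or_odd' a
    · exact (row_eq_zero_of_commute_single_sub_single
        (commute_rot_of_commute_stdGens h hcomm (by omega)) (by simp)
        (by simp [Fin.ext_iff]; omega) (by simp [Fin.ext_iff]; omega)).1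
    · exact (row_eq_zero_of_commute_single_sub_single
        (commute_rot_of_commute_stdGens h hcomm (by omega)) (by simp)
        (by simp [Fin.ext_iff]; omega) (by simp [Fin.ext_iff]; omega)).2
  · have htr : D ⟨2*l + (a - 2*l), by omega⟩ (Fin.last p) = 0 :=
      congrFun hcoeffs (.inr ⟨a - 2*l, by omega⟩)
    simpa only [Nat.add_sub_cancel' ha2l] using htr
  · exact hD _ _ (.inl (Fin.ext hap))

lemma eq_zero_of_commute_stdGens (h : 2*l ≤ p) {D : Matrix (Fin (p+1)) (Fin (p+1)) ℝ}
    (hD : ∀ a b, a = Fin.last p ∨ a = b → D a b = 0)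
    (hcomm : ∀ B ∈ stdGens p l, Commute B D) (hcoeffs : stdCoeffs h D = 0) : D = 0 := by
  ext ⟨a, ha⟩ b
  rw [Matrix.zero_apply]
  rcases Fin.eq_castSucc_or_eq_last b with ⟨⟨b, hb⟩, rfl⟩ | rfl
  · exact apply_eq_zero_of_commute_stdGens h hD hcomm hcoeffs ha hb
  · exact apply_last_eq_zero_of_commute_stdGens h hD hcomm hcoeffs ha

lemma mem_stdMASA_of_commute_stdGens (h : 2*l ≤ p) {A : Matrix (Fin (p+1)) (Fin (p+1)) ℝ}
    (hA : A ∈ eucAlg p) (hcomm : ∀ B ∈ stdGens p l, Commute B A) : A ∈ stdMASA p l := by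
  set T := ∑ s, stdCoeffs h A s • stdFam p l s
  have hT : T ∈ stdMASA p l := Submodule.sum_mem _ fun s _ => Submodule.smul_mem _ _ <|
    Submodule.subset_span <| (range_stdFam h).subset (Set.mem_range_self s)
  have hAT : A - T = 0 := by
    refine eq_zero_of_commute_stdGens h (fun a b hab => ?_) (fun B hB => ?_) ?_
    · rw [Matrix.sub_apply, apply_eq_zero_of_mem_eucAlg hA hab,
        apply_eq_zero_of_mem_stdMASA h hT hab, sub_zero]
    · exact (hcomm B hB).sub_right (commute_of_mem_stdMASA h (Submodule.subset_span hB) hT)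
    · rw [map_sub, map_sum, sub_eq_zero]
      simp only [map_smul, stdCoeffs_stdFam]
      exact pi_eq_sum_univ' _
  rwa [sub_eq_zero.mp hAT]

/-- For `0 ≤ l ≤ ⌊p/2⌋` and `k = p - 2l`, the standard subalgebra
`M = span{L₁₂,…,L_{2l-1,2l}, P_{2l+1},…,P_p}` is abelian of dimension `l + k` and
equals its own centralizer in `e(p)`, i.e. it is a MASA. -/
theorem std_masa_is_masa (p l : ℕ) (h : 2*l ≤ p) :
    (∀ A ∈ stdMASA p l, ∀ B ∈ stdMASA p l, A * B = B * A) ∧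
    Module.finrank ℝ (stdMASA p l) = l + (p - 2*l) ∧
    (∀ A ∈ eucAlg p, (∀ B ∈ stdMASA p l, A * B = B * A) → A ∈ stdMASA p l) :=
  ⟨fun _ hA _ hB => commute_of_mem_stdMASA h hA hB, finrank_stdMASA h,
    fun _ hA hc => mem_stdMASA_of_commute_stdGens h hA
      fun B hB => (hc B (Submodule.subset_span hB)).symm⟩

end
end

section
/- If p - k is odd (p - k = 2l + 1), then the abelian subalgebra span{L₁₂, …, L_{2l-1,2l}} ⊕ span{P_{p-k+1}, …, P_p} of e(p) is NOT maximal abelian: its centralizer also contains the translation P_{2l+1}. -/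
/-!
`P_{2l}` is the matrix unit at `(2l, p)`. Every generator of the subalgebra vanishes on rows `2l`
and `p` and on column `2l`. Hence the `(2l, p)` entry vanishes on the whole span but not on
`P_{2l}`, and `P_{2l}` annihilates the span from both sides, so it commutes with it.
-/

open Matrix

noncomputable section

lemma Lrot_apply_of_row_ne {p i : ℕ} {a : Fin (p+1)} (b : Fin (p+1))
    (h₁ : (a : ℕ) ≠ 2*i) (h₂ : (a : ℕ) ≠ 2*i+1) : Lrot p i a b = 0 := by
  simp [Lrot, h₁, h₂]

lemma Lrot_apply_of_col_ne {p i : ℕ} (a : Fin (p+1)) {b : Fin (p+1)}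
    (h₁ : (b : ℕ) ≠ 2*i) (h₂ : (b : ℕ) ≠ 2*i+1) : Lrot p i a b = 0 := by
  simp [Lrot, h₁, h₂]

lemma Ptr_apply_of_row_ne {p j : ℕ} {a : Fin (p+1)} (b : Fin (p+1)) (h : (a : ℕ) ≠ j) :
    Ptr p j a b = 0 := by
  simp [Ptr, h]

lemma Ptr_apply_of_col_ne {p j : ℕ} (a : Fin (p+1)) {b : Fin (p+1)} (h : (b : ℕ) ≠ p) :
    Ptr p j a b = 0 := by
  simp [Ptr, h]

lemma Ptr_apply_self {p j : ℕ} (hj : j < p + 1) : Ptr p j ⟨j, hj⟩ (Fin.last p) = 1 := by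
  simp [Ptr]

lemma Ptr_mul_eq_zero {p : ℕ} (j : ℕ) {A : Matrix (Fin (p+1)) (Fin (p+1)) ℝ}
    (hA : ∀ b, A (Fin.last p) b = 0) : Ptr p j * A = 0 := by
  ext a b
  rw [mul_apply, Finset.sum_eq_single (Fin.last p), hA, mul_zero, Matrix.zero_apply]
  · intro c _ hc
    rw [Ptr_apply_of_col_ne a (by simpa [Fin.ext_iff] using hc), zero_mul]
  · simp

lemma mul_Ptr_eq_zero {p j : ℕ} {A : Matrix (Fin (p+1)) (Fin (p+1)) ℝ}
    (hA : ∀ a c : Fin (p+1), (c : ℕ) = j → A a c = 0) : A * Ptr p j = 0 := by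
  ext a b
  rw [mul_apply, Matrix.zero_apply]
  refine Finset.sum_eq_zero fun c _ => ?_
  by_cases hc : (c : ℕ) = j
  · rw [hA a c hc, zero_mul]
  · rw [Ptr_apply_of_row_ne b hc, mul_zero]

lemma generator_apply_eq_zero {l p : ℕ} (hlp : 2*l < p) {M : Matrix (Fin (p+1)) (Fin (p+1)) ℝ}
    (hM : M ∈ {M | ∃ i < l, M = Lrot p i} ∪ {M | ∃ j, 2*l+1 ≤ j ∧ j < p ∧ M = Ptr p j}) :
    (∀ a b : Fin (p+1), (a : ℕ) = 2*l ∨ (a : ℕ) = p → M a b = 0) ∧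
      ∀ a c : Fin (p+1), (c : ℕ) = 2*l → M a c = 0 := by
  rcases hM with ⟨i, hi, rfl⟩ | ⟨j, hj₁, hj₂, rfl⟩
  · exact ⟨fun a b ha => Lrot_apply_of_row_ne b (by omega) (by omega),
      fun a c hc => Lrot_apply_of_col_ne a (by omega) (by omega)⟩
  · exact ⟨fun a b ha => Ptr_apply_of_row_ne b (by omega),
      fun a c hc => Ptr_apply_of_col_ne a (by omega)⟩

/-- If `p - k = 2l + 1` is odd, then the abelian subalgebra
`span{L₁₂,…,L_{2l-1,2l}} ⊕ span{P_{p-k+1},…,P_p}` of `e(p)` is NOT maximal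
abelian: the extra translation `P_{2l+1}` (0-based index `2l`) commutes with all
of it but does not belong to it. -/
theorem odd_case_not_maximal (l k p : ℕ) (hp : p = 2*l + 1 + k) :
    Ptr p (2*l) ∉ Submodule.span ℝ
        ({M | ∃ i < l, M = Lrot p i} ∪ {M | ∃ j, 2*l+1 ≤ j ∧ j < p ∧ M = Ptr p j}) ∧
    ∀ B ∈ Submodule.span ℝ
        ({M | ∃ i < l, M = Lrot p i} ∪ {M | ∃ j, 2*l+1 ≤ j ∧ j < p ∧ M = Ptr p j}),
      Ptr p (2*l) * B = B * Ptr p (2*l) := by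
  have hlp : 2*l < p := by omega
  have h2l : 2*l < p + 1 := by omega
  set S := Submodule.span ℝ
    ({M | ∃ i < l, M = Lrot p i} ∪ {M | ∃ j, 2*l+1 ≤ j ∧ j < p ∧ M = Ptr p j})
  constructor
  · intro hmem
    have hentry : S ≤ LinearMap.ker (entryLinearMap ℝ ℝ (⟨2*l, h2l⟩ : Fin (p+1)) (Fin.last p)) :=
      Submodule.span_le.2 fun M hM => (generator_apply_eq_zero hlp hM).1 _ _ (Or.inl rfl)
    simpa [Ptr_apply_self h2l] using hentry hmem
  · intro B hB
    have hann : S ≤ LinearMap.ker (LinearMap.mulLeft ℝ (Ptr p (2*l))) ⊓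
        LinearMap.ker (LinearMap.mulRight ℝ (Ptr p (2*l))) :=
      Submodule.span_le.2 fun M hM =>
        ⟨Ptr_mul_eq_zero _ fun b => (generator_apply_eq_zero hlp hM).1 _ b (Or.inr (by simp)),
          mul_Ptr_eq_zero (generator_apply_eq_zero hlp hM).2⟩
    obtain ⟨hleft, hright⟩ := Submodule.mem_inf.1 (hann hB)
    rw [LinearMap.mem_ker, LinearMap.mulLeft_apply] at hleft
    rw [LinearMap.mem_ker, LinearMap.mulRight_apply] at hright
    rw [hleft, hright]

end
end

section
/- In e(p,1) with p ≥ 3 and metric g = diag(-1,1,…,1), the subalgebra M spanned by {P₀ - P₁} ∪ {L_{0j} - L_{1j} + a_j P_j : j = 2,…,p} (for any fixed real constants a₂,…,a_p) is abelian of dimension p. -/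
open Matrix

noncomputable section

/-- The Minkowski metric `g = diag(-1,1,…,1)` on `M(p,1)` (index 0 timelike). -/
def gmet (p : ℕ) : Matrix (Fin (p+1)) (Fin (p+1)) ℝ :=
  Matrix.diagonal fun i => if i = 0 then -1 else 1

/-- The (pseudo)rotation generator `L_{ab}` of `o(p,1)`,
`L_{ab} = g_{bb}E_{ab} - g_{aa}E_{ba}`, satisfying `Xg + gXᵀ = 0`. -/
def Lgen (p : ℕ) (a b : Fin (p+1)) : Matrix (Fin (p+1)) (Fin (p+1)) ℝ :=
  Matrix.single a b (gmet p b b) - Matrix.single b a (gmet p a a)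

/-- `L_{ab}` as an element of `e(p,1)` in the `(p+2)×(p+2)` matrix realization. -/
def Lm (p : ℕ) (a b : Fin (p+1)) : Matrix (Fin (p+1) ⊕ Fin 1) (Fin (p+1) ⊕ Fin 1) ℝ :=
  Matrix.fromBlocks (Lgen p a b) 0 0 0

/-- The translation generator `P_μ` of `e(p,1)`. -/
def Pm (p : ℕ) (μ : Fin (p+1)) : Matrix (Fin (p+1) ⊕ Fin 1) (Fin (p+1) ⊕ Fin 1) ℝ :=
  Matrix.fromBlocks 0 (Matrix.of fun i _ => if i = μ then (1:ℝ) else 0) 0 0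

lemma gmet_diag (p : ℕ) (i : Fin (p+1)) : gmet p i i = if i = 0 then -1 else 1 := by
  simp [gmet]

lemma Pm_eq (p : ℕ) (μ : Fin (p+1)) :
    Pm p μ = Matrix.single (Sum.inl μ) (Sum.inr 0) (1:ℝ) := by
  ext i j
  rcases i with i | i <;> rcases j with j | j <;>
    simp [Pm, Matrix.single, Matrix.fromBlocks, eq_comm, Fin.fin_one_eq_zero]

lemma Lm_eq (p : ℕ) (a b : Fin (p+1)) :
    Lm p a b = Matrix.single (Sum.inl a) (Sum.inl b) (gmet p b b)
      - Matrix.single (Sum.inl b) (Sum.inl a) (gmet p a a) := by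
  ext i j
  rcases i with i | i <;> rcases j with j | j <;>
    simp [Lm, Lgen, Matrix.single, Matrix.fromBlocks]

lemma Pm_mul_Pm (p : ℕ) (μ ν : Fin (p+1)) : Pm p μ * Pm p ν = 0 := by
  rw [Pm_eq, Pm_eq]
  simp [Matrix.single_mul_single_of_ne]

lemma Pm_mul_Lm (p : ℕ) (μ a b : Fin (p+1)) : Pm p μ * Lm p a b = 0 := by
  rw [Pm_eq, Lm_eq, mul_sub]
  simp

lemma u_mul_gen (p : ℕ) (c : ℝ) (j : Fin (p+1)) :
    (Pm p 0 - Pm p 1) * (Lm p 0 j - Lm p 1 j + c • Pm p j) = 0 := by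
  rw [sub_mul, mul_add, mul_add, mul_sub, mul_sub, mul_smul_comm, mul_smul_comm,
    Pm_mul_Pm, Pm_mul_Lm, Pm_mul_Lm, Pm_mul_Lm, Pm_mul_Lm]
  simp [Pm_mul_Pm]

lemma gen_mul_u (p : ℕ) (c : ℝ) (j : Fin (p+1)) (hj0 : j ≠ 0) (hj1 : j ≠ 1)
    (h01 : (0 : Fin (p+1)) ≠ 1) :
    (Lm p 0 j - Lm p 1 j + c • Pm p j) * (Pm p 0 - Pm p 1) = 0 := by
  rw [Lm_eq, Lm_eq, Pm_eq, Pm_eq, Pm_eq]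
  simp only [add_mul, sub_mul, mul_sub, smul_mul_assoc,
    Matrix.single_mul_single_same, Matrix.single_mul_single_of_ne,
    hj0, hj1, h01, h01.symm, Ne.symm hj0, Ne.symm hj1, ne_eq,
    Sum.inl.injEq, Sum.inr.injEq, not_false_eq_true, reduceCtorEq, gmet_diag, hj0]
  ext r s
  simp [Matrix.single, gmet_diag, if_neg hj0]
  split_ifs <;> norm_num

lemma gen_mul_gen (p : ℕ) (c d : ℝ) (j k : Fin (p+1)) (hj0 : j ≠ 0) (hj1 : j ≠ 1)
    (hk0 : k ≠ 0) (hk1 : k ≠ 1) (hjk : j ≠ k) (h01 : (0 : Fin (p+1)) ≠ 1)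
    (h10 : (1 : Fin (p+1)) ≠ 0) (hp : p ≠ 0) :
    (Lm p 0 j - Lm p 1 j + c • Pm p j) * (Lm p 0 k - Lm p 1 k + d • Pm p k) = 0 := by
  rw [Lm_eq, Lm_eq, Lm_eq, Lm_eq, Pm_eq, Pm_eq]
  simp only [add_mul, sub_mul, mul_sub, mul_add, smul_mul_assoc, mul_smul_comm,
    Matrix.single_mul_single_same, Matrix.single_mul_single_of_ne,
    hj0, hj1, hk0, hk1, hjk, Ne.symm hjk, h01, h01.symm, Ne.symm hj0, Ne.symm hj1,
    Ne.symm hk0, Ne.symm hk1, ne_eq, Sum.inl.injEq, Sum.inr.injEq,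
    not_false_eq_true, reduceCtorEq]
  ext r s
  simp [Matrix.single, gmet_diag, if_neg hj0, if_neg hk0, if_neg h10, hp]
  split_ifs <;> norm_num

lemma u_apply_inl (p : ℕ) (r s : Fin (p+1)) :
    (Pm p 0 - Pm p 1) (Sum.inl r) (Sum.inl s) = 0 := by
  simp [Pm, Matrix.fromBlocks]

lemma u_apply_00 (p : ℕ) (hp : p ≠ 0) :
    (Pm p 0 - Pm p 1) (Sum.inl 0) (Sum.inr 0) = 1 := by
  have h01 : (0 : Fin (p+1)) ≠ 1 := by
    simp [Fin.ext_iff, Fin.val_one', Nat.mod_eq_of_lt (show 1 < p + 1 by omega)]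
  simp [Pm, Matrix.fromBlocks, h01]

lemma gen_apply_j0 (p : ℕ) (c : ℝ) (k j : Fin (p+1)) (hk0 : k ≠ 0) (h10 : (1 : Fin (p+1)) ≠ 0) :
    (Lm p 0 k - Lm p 1 k + c • Pm p k) (Sum.inl j) (Sum.inl 0)
      = if j = k then 1 else 0 := by
  rw [Lm_eq, Lm_eq, Pm_eq]
  simp [Matrix.single, gmet_diag, hk0, h10, Ne.symm hk0, Ne.symm h10, eq_comm]
  split_ifs <;> norm_num

lemma gen_apply_0r (p : ℕ) (c : ℝ) (k : Fin (p+1)) (hk0 : k ≠ 0) :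
    (Lm p 0 k - Lm p 1 k + c • Pm p k) (Sum.inl 0) (Sum.inr 0) = 0 := by
  rw [Lm_eq, Lm_eq, Pm_eq]
  simp [Matrix.single, Ne.symm hk0]
  exact fun h => absurd h hk0

/-- In `e(p,1)` with `p ≥ 3`, the subalgebra spanned by
`{P₀ - P₁} ∪ {L₀ⱼ - L₁ⱼ + aⱼPⱼ : j = 2,…,p}` (for any fixed reals `aⱼ`) is
abelian of dimension `p`. -/
theorem ep1_nonsplitting_masa_abelian (p : ℕ) (hp : 3 ≤ p) (a : Fin (p+1) → ℝ) :
    (∀ M ∈ Submodule.span ℝ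
        (insert (Pm p 0 - Pm p 1)
          {M | ∃ j : Fin (p+1), 2 ≤ (j : ℕ) ∧ M = Lm p 0 j - Lm p 1 j + a j • Pm p j}),
     ∀ N ∈ Submodule.span ℝ
        (insert (Pm p 0 - Pm p 1)
          {M | ∃ j : Fin (p+1), 2 ≤ (j : ℕ) ∧ M = Lm p 0 j - Lm p 1 j + a j • Pm p j}),
      M * N = N * M) ∧
    Module.finrank ℝ (Submodule.span ℝ
        (insert (Pm p 0 - Pm p 1)
          {M | ∃ j : Fin (p+1), 2 ≤ (j : ℕ) ∧ M = Lm p 0 j - Lm p 1 j + a j • Pm p j}))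
      = p := by
  classical
  have hp0 : p ≠ 0 := by omega
  have hv1 : ((1 : Fin (p+1)) : ℕ) = 1 := by
    rw [Fin.val_one']; exact Nat.mod_eq_of_lt (by omega)
  have h01 : (0 : Fin (p+1)) ≠ 1 := by simp [Fin.ext_iff, hv1, hp0]
  set S : Set (Matrix (Fin (p+1) ⊕ Fin 1) (Fin (p+1) ⊕ Fin 1) ℝ) :=
    insert (Pm p 0 - Pm p 1)
      {M | ∃ j : Fin (p+1), 2 ≤ (j : ℕ) ∧ M = Lm p 0 j - Lm p 1 j + a j • Pm p j} with hSdef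
  have hidx : ∀ j : Fin (p+1), 2 ≤ (j:ℕ) → j ≠ 0 ∧ j ≠ 1 := by
    intro j hj
    constructor
    · intro h; rw [h] at hj; simp at hj
    · intro h; rw [h, hv1] at hj; omega
  constructor
  · intro M hM N hN
    induction hM, hN using Submodule.span_induction₂ with
    | mem_mem x y hx hy =>
      rcases Set.mem_insert_iff.mp hx with rfl | ⟨j, hj, rfl⟩ <;>
        rcases Set.mem_insert_iff.mp hy with rfl | ⟨k, hk, rfl⟩
      · rfl
      · obtain ⟨hk0, hk1⟩ := hidx k hk
        rw [u_mul_gen, gen_mul_u p _ k hk0 hk1 h01]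
      · obtain ⟨hj0, hj1⟩ := hidx j hj
        rw [u_mul_gen, gen_mul_u p _ j hj0 hj1 h01]
      · obtain ⟨hj0, hj1⟩ := hidx j hj
        obtain ⟨hk0, hk1⟩ := hidx k hk
        rcases eq_or_ne j k with rfl | hjk
        · rfl
        · rw [gen_mul_gen p _ _ j k hj0 hj1 hk0 hk1 hjk h01 (Ne.symm h01) hp0,
              gen_mul_gen p _ _ k j hk0 hk1 hj0 hj1 (Ne.symm hjk) h01 (Ne.symm h01) hp0]
    | zero_left y hy => simp
    | zero_right x hx => simp
    | add_left x y z hx hy hz h1 h2 => rw [add_mul, mul_add, h1, h2]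
    | add_right x y z hx hy hz h1 h2 => rw [mul_add, add_mul, h1, h2]
    | smul_left r x y hx hy h => rw [smul_mul_assoc, mul_smul_comm, h]
    | smul_right r x y hx hy h => rw [mul_smul_comm, smul_mul_assoc, h]
  · set b : {j : Fin (p+1) // j ≠ 1} → Matrix (Fin (p+1) ⊕ Fin 1) (Fin (p+1) ⊕ Fin 1) ℝ :=
      fun j => if j.1 = 0 then Pm p 0 - Pm p 1
        else Lm p 0 j.1 - Lm p 1 j.1 + a j.1 • Pm p j.1 with hbdef
    have hrange : Set.range b = S := by
      ext M
      constructor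
      · rintro ⟨⟨j, hj1⟩, rfl⟩
        by_cases hj0 : j = 0
        · left; simp [hbdef, hj0]
        · right
          refine ⟨j, ?_, by simp [hbdef, hj0]⟩
          have h0 : (j:ℕ) ≠ 0 := fun h => hj0 (Fin.ext (by simp [h]))
          have h1 : (j:ℕ) ≠ 1 := fun h => hj1 (Fin.ext (by rw [hv1]; exact h))
          omega
      · rintro (rfl | ⟨j, hj, rfl⟩)
        · exact ⟨⟨0, h01⟩, by simp [hbdef]⟩
        · obtain ⟨hj0, hj1⟩ := hidx j hj
          exact ⟨⟨j, hj1⟩, by simp [hbdef, hj0]⟩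
    have hli : LinearIndependent ℝ b := by
      rw [Fintype.linearIndependent_iff]
      intro g hg i
      obtain ⟨j, hj1⟩ := i
      by_cases hj0 : j = 0
      · have h := congrFun (congrFun hg (Sum.inl 0)) (Sum.inr 0)
        rw [Matrix.sum_apply] at h
        rw [Finset.sum_eq_single (⟨0, h01⟩ : {j : Fin (p+1) // j ≠ 1}) ?_ (by simp)] at h
        · subst hj0
          simpa [hbdef, u_apply_00 p hp0] using h
        · intro i _ hi
          have hi0 : i.1 ≠ 0 := fun h' => hi (Subtype.ext h')
          simp [hbdef, hi0, gen_apply_0r p _ _ hi0]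
      · have h := congrFun (congrFun hg (Sum.inl j)) (Sum.inl 0)
        rw [Matrix.sum_apply] at h
        rw [Finset.sum_eq_single (⟨j, hj1⟩ : {j : Fin (p+1) // j ≠ 1}) ?_ (by simp)] at h
        · simpa [hbdef, hj0, gen_apply_j0 p _ j j hj0 (Ne.symm h01)] using h
        · intro i _ hi
          by_cases hi0 : i.1 = 0
          · simp [hbdef, hi0, u_apply_inl p j 0]
          · have hji : j ≠ i.1 := fun h' => hi (Subtype.ext h'.symm)
            simp [hbdef, hi0, gen_apply_j0 p _ i.1 j hi0 (Ne.symm h01), hji]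
    rw [← hrange, finrank_span_eq_card hli]
    have := Fintype.card_subtype_compl (α := Fin (p+1)) (· = 1)
    simp only [Fintype.card_subtype_eq, Fintype.card_fin] at this
    simpa using this
end
end

section
/- Let K = [[0,J],[J,0]] with J = [[0,1],[1,0]]. The set M of block-diagonal matrices X(a,b) = diag([[a,b],[-b,a]], [[-a,-b],[b,-a]]) is a two-dimensional maximal abelian subalgebra of o(2,2) = {Y : YK + KY^T = 0}, and it is not conjugate to the subalgebra with blocks [[a,b],[0,a]], [[-a,-b],[0,-a]] under O(2,2) (the two have different eigenvalue structures: one has elements with non-real eigenvalues, the other is composed of matrices with real eigenvalues only). -/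
open Matrix

noncomputable section

/-- `J = [[0,1],[1,0]]`. -/
def Jm : Matrix (Fin 2) (Fin 2) ℝ := !![0,1;1,0]

/-- The metric `K = [[0,J],[J,0]]` of signature `(2,2)`. -/
def K22 : Matrix (Fin 2 ⊕ Fin 2) (Fin 2 ⊕ Fin 2) ℝ := Matrix.fromBlocks 0 Jm Jm 0

/-- The element `X(a,b) = diag([[a,b],[0,a]], [[-a,-b],[0,-a]])` (real eigenvalues). -/
def X1 (a b : ℝ) : Matrix (Fin 2 ⊕ Fin 2) (Fin 2 ⊕ Fin 2) ℝ :=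
  Matrix.fromBlocks !![a,b;0,a] 0 0 !![-a,-b;0,-a]

/-- The element `X(a,b) = diag([[a,b],[-b,a]], [[-a,-b],[b,-a]])` (complex eigenvalues). -/
def X2 (a b : ℝ) : Matrix (Fin 2 ⊕ Fin 2) (Fin 2 ⊕ Fin 2) ℝ :=
  Matrix.fromBlocks !![a,b;-b,a] 0 0 !![-a,-b;b,-a]

/-- Every element of the span of the `X1` family is itself an `X1 a b`. -/
lemma span_X1_mem {N : Matrix (Fin 2 ⊕ Fin 2) (Fin 2 ⊕ Fin 2) ℝ}
    (h : N ∈ Submodule.span ℝ {M | ∃ a b : ℝ, M = X1 a b}) : ∃ a b, N = X1 a b := by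
  induction h using Submodule.span_induction with
  | mem x hx => exact hx
  | zero =>
      exact ⟨0, 0, by ext i j; rcases i with i|i <;> rcases j with j|j <;> fin_cases i <;>
        fin_cases j <;> simp [X1, fromBlocks]⟩
  | add x y _ _ hx hy =>
      obtain ⟨a, b, rfl⟩ := hx; obtain ⟨c, d, rfl⟩ := hy
      exact ⟨a + c, b + d, by ext i j; rcases i with i|i <;> rcases j with j|j <;> fin_cases i <;>
        fin_cases j <;> simp [X1, fromBlocks] <;> ring⟩
  | smul c x _ hx =>
      obtain ⟨a, b, rfl⟩ := hx
      exact ⟨c * a, c * b, by ext i j; rcases i with i|i <;> rcases j with j|j <;> fin_cases i <;>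
        fin_cases j <;> simp [X1, fromBlocks] <;> ring⟩

lemma X2_eq_lin (a b : ℝ) : X2 a b = a • X2 1 0 + b • X2 0 1 := by
  ext i j; rcases i with i|i <;> rcases j with j|j <;> fin_cases i <;> fin_cases j <;>
    simp [X2, fromBlocks] <;> ring

/-- Any element of `o(2,2)` commuting with all `X2 a b` is itself an `X2 a b`. -/
lemma masa_X2 (Y : Matrix (Fin 2 ⊕ Fin 2) (Fin 2 ⊕ Fin 2) ℝ)
    (hK : Y * K22 + K22 * Yᵀ = 0) (hc : ∀ a b : ℝ, Y * X2 a b = X2 a b * Y) :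
    Y = X2 (Y (Sum.inl 0) (Sum.inl 0)) (Y (Sum.inl 0) (Sum.inl 1)) := by
  have f1 := Matrix.ext_iff.2 (hc 1 0) (Sum.inl 0) (Sum.inr 0)
  have f2 := Matrix.ext_iff.2 (hc 1 0) (Sum.inl 0) (Sum.inr 1)
  have f3 := Matrix.ext_iff.2 (hc 1 0) (Sum.inl 1) (Sum.inr 0)
  have f4 := Matrix.ext_iff.2 (hc 1 0) (Sum.inl 1) (Sum.inr 1)
  have f5 := Matrix.ext_iff.2 (hc 1 0) (Sum.inr 0) (Sum.inl 0)
  have f6 := Matrix.ext_iff.2 (hc 1 0) (Sum.inr 0) (Sum.inl 1)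
  have f7 := Matrix.ext_iff.2 (hc 1 0) (Sum.inr 1) (Sum.inl 0)
  have f8 := Matrix.ext_iff.2 (hc 1 0) (Sum.inr 1) (Sum.inl 1)
  have g1 := Matrix.ext_iff.2 (hc 0 1) (Sum.inl 0) (Sum.inl 0)
  have g2 := Matrix.ext_iff.2 (hc 0 1) (Sum.inl 0) (Sum.inl 1)
  have g3 := Matrix.ext_iff.2 (hc 0 1) (Sum.inr 0) (Sum.inr 0)
  have g4 := Matrix.ext_iff.2 (hc 0 1) (Sum.inr 0) (Sum.inr 1)
  have k1 := Matrix.ext_iff.2 hK (Sum.inl 0) (Sum.inr 0)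
  have k2 := Matrix.ext_iff.2 hK (Sum.inl 0) (Sum.inr 1)
  have k3 := Matrix.ext_iff.2 hK (Sum.inl 1) (Sum.inr 0)
  have k4 := Matrix.ext_iff.2 hK (Sum.inl 1) (Sum.inr 1)
  simp [X2, K22, Jm, mul_apply, Matrix.add_apply, transpose_apply, Fintype.sum_sum_type,
    Fin.sum_univ_succ, fromBlocks]
    at f1 f2 f3 f4 f5 f6 f7 f8 g1 g2 g3 g4 k1 k2 k3 k4
  ext i j
  rcases i with i|i <;> rcases j with j|j <;> fin_cases i <;> fin_cases j <;>
    simp [X2, fromBlocks] <;>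
    linarith [f1, f2, f3, f4, f5, f6, f7, f8, g1, g2, g3, g4, k1, k2, k3, k4]

lemma K22_sq : K22 * K22 = 1 := by
  ext i j; rcases i with i|i <;> rcases j with j|j <;> fin_cases i <;> fin_cases j <;>
    simp [K22, Jm, mul_apply, Fintype.sum_sum_type, Fin.sum_univ_succ, fromBlocks, one_apply]

lemma trace_X1_sq (a b : ℝ) : (X1 a b * X1 a b).trace = 4 * a ^ 2 := by
  simp [trace, X1, mul_apply, Fintype.sum_sum_type, Fin.sum_univ_succ, fromBlocks, diag]; ring

lemma trace_X2_sq : (X2 0 1 * X2 0 1).trace = -4 := by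
  simp [trace, X2, mul_apply, Fintype.sum_sum_type, Fin.sum_univ_succ, fromBlocks, diag]; ring

/-- The family `X₂(a,b)` is a two-dimensional maximal abelian
subalgebra of `o(2,2)`, and it is not conjugate under `O(2,2)` to the subalgebra
spanned by the `X₁(a,b)`. -/
theorem o22_rotation_masa_inequivalent :
    (∀ a b : ℝ, X2 a b * K22 + K22 * (X2 a b)ᵀ = 0) ∧
    (∀ a b a' b' : ℝ, X2 a b * X2 a' b' = X2 a' b' * X2 a b) ∧
    Module.finrank ℝ (Submodule.span ℝ {M | ∃ a b : ℝ, M = X2 a b}) = 2 ∧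
    (∀ Y : Matrix (Fin 2 ⊕ Fin 2) (Fin 2 ⊕ Fin 2) ℝ,
      Y * K22 + K22 * Yᵀ = 0 → (∀ a b : ℝ, Y * X2 a b = X2 a b * Y) →
      Y ∈ Submodule.span ℝ {M | ∃ a b : ℝ, M = X2 a b}) ∧
    (∀ G : Matrix (Fin 2 ⊕ Fin 2) (Fin 2 ⊕ Fin 2) ℝ, G * K22 * Gᵀ = K22 →
      ¬ ((fun M => G * M * G⁻¹) '' ((Submodule.span ℝ {M | ∃ a b : ℝ, M = X2 a b} :
            Submodule ℝ (Matrix (Fin 2 ⊕ Fin 2) (Fin 2 ⊕ Fin 2) ℝ)) : Set _)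
          = ((Submodule.span ℝ {M | ∃ a b : ℝ, M = X1 a b} :
            Submodule ℝ (Matrix (Fin 2 ⊕ Fin 2) (Fin 2 ⊕ Fin 2) ℝ)) : Set _))) := by
  refine ⟨?_, ?_, ?_, ?_, ?_⟩
  · -- membership in o(2,2)
    intro a b
    ext i j
    rcases i with i|i <;> rcases j with j|j <;> fin_cases i <;> fin_cases j <;>
      simp [X2, K22, Jm, mul_apply, Fintype.sum_sum_type, Fin.sum_univ_succ, fromBlocks] <;> ring
  · -- abelian
    intro a b a' b'
    ext i j
    rcases i with i|i <;> rcases j with j|j <;> fin_cases i <;> fin_cases j <;>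
      simp [X2, mul_apply, Fintype.sum_sum_type, Fin.sum_univ_succ, fromBlocks] <;> ring
  · -- two-dimensional
    have hspan : Submodule.span ℝ {M | ∃ a b : ℝ, M = X2 a b}
        = Submodule.span ℝ (Set.range ![X2 1 0, X2 0 1]) := by
      apply le_antisymm
      · rw [Submodule.span_le]
        rintro M ⟨a, b, rfl⟩
        rw [X2_eq_lin a b]
        exact Submodule.add_mem _
          (Submodule.smul_mem _ _ (Submodule.subset_span ⟨0, rfl⟩))
          (Submodule.smul_mem _ _ (Submodule.subset_span ⟨1, rfl⟩))
      · rw [Submodule.span_le]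
        rintro M ⟨i, rfl⟩
        fin_cases i
        · exact Submodule.subset_span ⟨1, 0, by simp⟩
        · exact Submodule.subset_span ⟨0, 1, by simp⟩
    have hli : LinearIndependent ℝ ![X2 1 0, X2 0 1] := by
      rw [LinearIndependent.pair_iff]
      intro s t hst
      constructor
      · have := Matrix.ext_iff.2 hst (Sum.inl 0) (Sum.inl 0)
        simpa [X2, fromBlocks] using this
      · have := Matrix.ext_iff.2 hst (Sum.inl 0) (Sum.inl 1)
        simpa [X2, fromBlocks] using this
    rw [hspan, finrank_span_eq_card hli]
    simp
  · -- maximal abelian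
    intro Y hK hc
    rw [masa_X2 Y hK hc]
    exact Submodule.subset_span ⟨_, _, rfl⟩
  · -- inequivalence
    intro G hG h
    have hdK : K22.det ≠ 0 := by
      intro h0
      have : K22.det * K22.det = 1 := by rw [← det_mul, K22_sq, det_one]
      rw [h0] at this; norm_num at this
    have hGdet : G.det ≠ 0 := by
      have h1 : G.det * K22.det * G.det = K22.det := by
        calc G.det * K22.det * G.det = (G * K22 * Gᵀ).det := by
              rw [det_mul, det_mul, det_transpose]
          _ = K22.det := by rw [hG]
      intro h0
      rw [h0] at h1
      simp at h1
      exact hdK h1.symm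
    have hGinv : G⁻¹ * G = 1 := nonsing_inv_mul _ (isUnit_iff_ne_zero.2 hGdet)
    have hmem : G * X2 0 1 * G⁻¹ ∈ ((Submodule.span ℝ {M | ∃ a b : ℝ, M = X1 a b} :
        Submodule ℝ (Matrix (Fin 2 ⊕ Fin 2) (Fin 2 ⊕ Fin 2) ℝ)) : Set _) := by
      rw [← h]
      exact Set.mem_image_of_mem _ (Submodule.subset_span ⟨0, 1, rfl⟩)
    obtain ⟨a, b, hab⟩ := span_X1_mem hmem
    have hsq : (G * X2 0 1 * G⁻¹) * (G * X2 0 1 * G⁻¹) = G * (X2 0 1 * X2 0 1) * G⁻¹ := by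
      simp only [mul_assoc]
      rw [← mul_assoc G⁻¹ G, hGinv, one_mul]
    have ht : ((G * X2 0 1 * G⁻¹) * (G * X2 0 1 * G⁻¹)).trace = (X2 0 1 * X2 0 1).trace := by
      rw [hsq, trace_mul_comm, ← mul_assoc, hGinv, one_mul]
    rw [hab, trace_X1_sq, trace_X2_sq] at ht
    nlinarith [ht, sq_nonneg a]

end
end
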